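/- For every nonempty finite subgraph G = (V, E) of the unit-distance graph of ℝ^n, m_1(ℝ^n) ≤ α(G)/|V|. -/

import Mathlib

open MeasureTheory Filter Metric Set Pointwise
open scoped RealInnerProductSpace
open scoped ENNReal

noncomputable section

/-- The cube `[p - r, p + r]^n` in `ℝ^n`. -/
def cube (n : ℕ) (p : EuclideanSpace ℝ (Fin n)) (r : ℝ) : Set (EuclideanSpace ℝ (Fin n)) :=
  {x | ∀ i, |x i - p i| ≤ r}

/-- Upper density of a (not necessarily measurable) subset of `ℝ^n`; `volume` applied to an
arbitrary set is the Lebesgue outer measure. -/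
def upperDensity {n : ℕ} (A : Set (EuclideanSpace ℝ (Fin n))) : ℝ :=
  limsup (fun r : ℝ => (volume (A ∩ cube n 0 r)).toReal / (2 * r) ^ n) atTop

/-- `A` has density `d`. -/
def HasDensity {n : ℕ} (A : Set (EuclideanSpace ℝ (Fin n))) (d : ℝ) : Prop :=
  ∀ p, Tendsto (fun r : ℝ => (volume (A ∩ cube n p r)).toReal / (2 * r) ^ n) atTop (nhds d)

/-- `A` avoids distance `1`. -/
def Avoids1 {n : ℕ} (A : Set (EuclideanSpace ℝ (Fin n))) : Prop :=
  ∀ x ∈ A, ∀ y ∈ A, dist x y ≠ 1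

/-- `m_1(ℝ^n)`: the supremum of upper densities of measurable 1-avoiding sets. -/
def m1 (n : ℕ) : ℝ :=
  sSup {d | ∃ A : Set (EuclideanSpace ℝ (Fin n)),
    MeasurableSet A ∧ Avoids1 A ∧ upperDensity A = d}

/-- Independence number of the graph with adjacency relation `adj` on vertex set `V`. -/
def indepNum {β : Type*} (adj : β → β → Prop) (V : Set β) : ℕ :=
  sSup {k | ∃ s : Finset β, ↑s ⊆ V ∧ (∀ x ∈ s, ∀ y ∈ s, x ≠ y → ¬ adj x y) ∧ s.card = k}

/-- `A` is a union of blocks: points in the same block are at distance `< 1`, points in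
distinct blocks at distance `> 1`. -/
def HasBlockStructure {n : ℕ} (A : Set (EuclideanSpace ℝ (Fin n))) : Prop :=
  ∃ B : ℕ → Set (EuclideanSpace ℝ (Fin n)),
    A = (⋃ i, B i) ∧
    (∀ i, ∀ x ∈ B i, ∀ y ∈ B i, dist x y < 1) ∧
    (∀ i j, i ≠ j → ∀ x ∈ B i, ∀ y ∈ B j, 1 < dist x y)

/-- A fixed unit vector in `ℝ^n` (junk value for `n = 0`). -/
def unitVec (n : ℕ) : EuclideanSpace ℝ (Fin n) :=
  if h : n = 0 then 0 else EuclideanSpace.single ⟨0, Nat.pos_of_ne_zero h⟩ 1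

/-- `Ω_n(t)`: the average over the unit sphere `S^{n-1}` of `ξ ↦ cos (t ⟪ξ, e⟫)` for a fixed
unit vector `e`; the measure `volume.toSphere` is rotation invariant, hence proportional to the
surface measure, so the average agrees with the surface-measure average. -/
def Omega (n : ℕ) (t : ℝ) : ℝ :=
  ⨍ ξ : sphere (0 : EuclideanSpace ℝ (Fin n)) 1,
    Real.cos (t * ⟪(ξ : EuclideanSpace ℝ (Fin n)), unitVec n⟫) ∂(volume.toSphere)

open scoped Classical in
/-- Sum of `f (x - y)` over unordered pairs `{x, y}` of distinct points of `C`
(for `f` invariant under negation this equals the sum over `(C choose 2)`). -/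
def pairSum {n : ℕ} (C : Finset (EuclideanSpace ℝ (Fin n)))
    (f : EuclideanSpace ℝ (Fin n) → ℝ) : ℝ :=
  (∑ p ∈ C.offDiag, f (p.1 - p.2)) / 2

lemma measurableSet_cube' (n : ℕ) (p : EuclideanSpace ℝ (Fin n)) (r : ℝ) :
    MeasurableSet (cube n p r) := by
  have : cube n p r = ⋂ i, {x : EuclideanSpace ℝ (Fin n) | |x i - p i| ≤ r} := by
    ext x; simp [cube]
  rw [this]
  exact MeasurableSet.iInter fun i =>
    measurableSet_le (((EuclideanSpace.proj i :
      EuclideanSpace ℝ (Fin n) →L[ℝ] ℝ).continuous.measurable).sub measurable_const).abs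
      measurable_const

lemma volume_cube' (n : ℕ) (r : ℝ) :
    volume (cube n 0 r) = ENNReal.ofReal (2 * r) ^ n := by
  have h : cube n 0 r =
      ((MeasurableEquiv.toLp 2 (Fin n → ℝ)).symm) ⁻¹' (Set.univ.pi fun _ : Fin n => Icc (-r) r) := by
    ext x
    simp [cube, MeasurableEquiv.toLp, abs_le, Set.mem_pi, and_comm]
    constructor
    · intro h; exact ⟨fun i => (h i).1, fun i => (h i).2⟩
    · intro h i; exact ⟨h.1 i, h.2 i⟩
  rw [h, (EuclideanSpace.volume_preserving_symm_measurableEquiv_toLp (Fin n)).measure_preimage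
    (MeasurableSet.univ_pi fun _ => measurableSet_Icc).nullMeasurableSet]
  rw [volume_pi_pi]
  simp [Real.volume_Icc]
  congr 1
  ring_nf
  rw [ENNReal.ofReal_mul' (by norm_num : (0:ℝ) ≤ 2), ENNReal.ofReal_ofNat]

lemma key_count (n : ℕ) (V : Finset (EuclideanSpace ℝ (Fin n)))
    (Adj : EuclideanSpace ℝ (Fin n) → EuclideanSpace ℝ (Fin n) → Prop)
    (hedge : ∀ x y, Adj x y → dist x y = 1)
    (A : Set (EuclideanSpace ℝ (Fin n))) (hAm : MeasurableSet A) (hA1 : Avoids1 A)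
    (M : ℝ) (hM : ∀ v ∈ V, ∀ i, |v i| ≤ M) (s : ℝ) :
    (V.card : ℝ≥0∞) * volume (A ∩ cube n 0 s) ≤
      (indepNum Adj ↑V : ℝ≥0∞) * ENNReal.ofReal (2 * (s + M)) ^ n := by
  classical
  set r := s + M with hr
  set C := cube n 0 r with hC
  set S : EuclideanSpace ℝ (Fin n) → Set (EuclideanSpace ℝ (Fin n)) :=
    fun v => (· + v) ⁻¹' A with hS
  have hSm : ∀ v, MeasurableSet (S v) := fun v => hAm.preimage (measurable_add_const v)
  have step1 : ∀ v ∈ V, volume (A ∩ cube n 0 s) ≤ volume (S v ∩ C) := by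
    intro v hv
    have hpre := (measurePreserving_add_right volume v).measure_preimage
      ((hAm.inter (measurableSet_cube' n 0 s)).nullMeasurableSet)
    rw [← hpre]
    apply measure_mono
    intro x hx
    rw [Set.mem_preimage] at hx
    refine ⟨hx.1, fun i => ?_⟩
    have h1 : |(x + v) i - (0 : EuclideanSpace ℝ (Fin n)) i| ≤ s := hx.2 i
    have h2 : (x + v) i = x i + v i := rfl
    have h3 : ((0 : EuclideanSpace ℝ (Fin n)) : EuclideanSpace ℝ (Fin n)) i = 0 := rfl
    rw [h2, h3, sub_zero] at h1
    have h4 := hM v hv i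
    have : |x i - (0 : EuclideanSpace ℝ (Fin n)) i| = |x i| := by rw [h3, sub_zero]
    rw [this]
    calc |x i| = |(x i + v i) + (- v i)| := by ring_nf
      _ ≤ |x i + v i| + |(- v i)| := abs_add_le _ _
      _ ≤ s + M := by rw [abs_neg]; exact add_le_add h1 h4
  have hpoint : ∀ x, ∑ v ∈ V, (S v).indicator (1 : EuclideanSpace ℝ (Fin n) → ℝ≥0∞) x
      ≤ (indepNum Adj ↑V : ℝ≥0∞) := by
    intro x
    have hsum : ∑ v ∈ V, (S v).indicator (1 : EuclideanSpace ℝ (Fin n) → ℝ≥0∞) x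
        = ((V.filter fun v => x + v ∈ A).card : ℝ≥0∞) := by
      rw [← Finset.sum_boole]
      apply Finset.sum_congr rfl
      intro v _
      simp [Set.indicator_apply, hS, Set.mem_preimage]
    rw [hsum]
    have hmem : (V.filter fun v => x + v ∈ A).card ≤ indepNum Adj ↑V := by
      apply le_csSup
      · exact ⟨V.card, fun k ⟨t, ht, _, hk⟩ => hk ▸ Finset.card_le_card (Finset.coe_subset.mp ht)⟩
      · refine ⟨V.filter fun v => x + v ∈ A, ?_, ?_, rfl⟩
        · exact Finset.coe_subset.mpr (Finset.filter_subset _ _)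
        · intro v hv w hw hne hadj
          simp only [Finset.mem_filter] at hv hw
          exact hA1 (x + v) hv.2 (x + w) hw.2 (by rw [dist_add_left]; exact hedge v w hadj)
    exact_mod_cast hmem
  calc (V.card : ℝ≥0∞) * volume (A ∩ cube n 0 s)
      = ∑ _v ∈ V, volume (A ∩ cube n 0 s) := by rw [Finset.sum_const, nsmul_eq_mul]
    _ ≤ ∑ v ∈ V, volume (S v ∩ C) := Finset.sum_le_sum step1
    _ = ∑ v ∈ V, ∫⁻ x in C, (S v).indicator (1 : EuclideanSpace ℝ (Fin n) → ℝ≥0∞) x := by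
        refine Finset.sum_congr rfl fun v _ => ?_
        rw [lintegral_indicator_one (hSm v), Measure.restrict_apply (hSm v)]
    _ = ∫⁻ x in C, ∑ v ∈ V, (S v).indicator (1 : EuclideanSpace ℝ (Fin n) → ℝ≥0∞) x :=
        (lintegral_finset_sum _ fun v _ => (measurable_one.indicator (hSm v))).symm
    _ ≤ ∫⁻ _x in C, (indepNum Adj ↑V : ℝ≥0∞) := lintegral_mono hpoint
    _ = (indepNum Adj ↑V : ℝ≥0∞) * volume C := by
        rw [lintegral_const, Measure.restrict_apply_univ]
    _ = (indepNum Adj ↑V : ℝ≥0∞) * ENNReal.ofReal (2 * (s + M)) ^ n := by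
        rw [hC, volume_cube']

theorem m1_le_indepNum_ratio (n : ℕ)
    (V : Finset (EuclideanSpace ℝ (Fin n)))
    (Adj : EuclideanSpace ℝ (Fin n) → EuclideanSpace ℝ (Fin n) → Prop)
    (hVne : V.Nonempty)
    (hsymm : ∀ x y, Adj x y → Adj y x)
    (hedge : ∀ x y, Adj x y → x ∈ V ∧ y ∈ V ∧ dist x y = 1) :
    m1 n ≤ (indepNum Adj ↑V : ℝ) / (V.card : ℝ) := by
  classical
  have hcardpos : 0 < V.card := hVne.card_pos
  have hcard' : (0:ℝ) < (V.card : ℝ) := by exact_mod_cast hcardpos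
  set α : ℝ := (indepNum Adj ↑V : ℝ) with hα
  have hrhs0 : (0:ℝ) ≤ α / V.card := div_nonneg (Nat.cast_nonneg _) (Nat.cast_nonneg _)
  apply Real.sSup_le _ hrhs0
  rintro d ⟨A, hAm, hA1, rfl⟩
  set M := V.sup' hVne (fun v => ‖v‖) with hMdef
  obtain ⟨v₀, hv₀⟩ := hVne
  have hM0 : 0 ≤ M := le_trans (norm_nonneg v₀) (Finset.le_sup' _ hv₀)
  have hM : ∀ v ∈ V, ∀ i, |v i| ≤ M := by
    intro v hv i
    have h1 : |v i| ≤ ‖v‖ := by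
      have h2 : |v i| ^ 2 ≤ ∑ j, ‖v j‖ ^ 2 := by
        have := Finset.single_le_sum (f := fun j => ‖v j‖ ^ 2)
          (fun j _ => sq_nonneg _) (Finset.mem_univ i)
        simpa [Real.norm_eq_abs] using this
      have h3 := Real.sqrt_le_sqrt h2
      rw [Real.sqrt_sq_eq_abs, abs_abs] at h3
      rw [EuclideanSpace.norm_eq]
      exact h3
    exact h1.trans (Finset.le_sup' _ hv)
  have hedge' : ∀ x y, Adj x y → dist x y = 1 := fun x y h => (hedge x y h).2.2
  have key := fun s : ℝ => key_count n V Adj hedge' A hAm hA1 M hM s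
  have hbound : ∀ s : ℝ, 1 ≤ s →
      (volume (A ∩ cube n 0 s)).toReal / (2*s)^n ≤ α / V.card * ((s+M)/s)^n := by
    intro s hs
    have hs0 : (0:ℝ) < s := lt_of_lt_of_le one_pos hs
    have hfin : (indepNum Adj ↑V : ℝ≥0∞) * ENNReal.ofReal (2*(s+M)) ^ n ≠ ⊤ :=
      ENNReal.mul_ne_top (ENNReal.natCast_ne_top _) (ENNReal.pow_ne_top ENNReal.ofReal_ne_top)
    have hto := ENNReal.toReal_mono hfin (key s)
    rw [ENNReal.toReal_mul, ENNReal.toReal_mul, ENNReal.toReal_pow,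
      ENNReal.toReal_ofReal (by linarith), ENNReal.toReal_natCast, ENNReal.toReal_natCast] at hto
    have h2 : (volume (A ∩ cube n 0 s)).toReal ≤ α * (2*(s+M))^n / V.card := by
      rw [le_div_iff₀ hcard']
      nlinarith [hto]
    calc (volume (A ∩ cube n 0 s)).toReal / (2*s)^n
        ≤ (α * (2*(s+M))^n / V.card) / (2*s)^n := by
          gcongr
      _ = α / V.card * ((s+M)/s)^n := by
          rw [div_pow, mul_pow 2 s, mul_pow 2 (s+M)]
          field_simp
  have hh : Tendsto (fun s : ℝ => α / V.card * ((s+M)/s)^n) atTop (nhds (α / V.card)) := by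
    have h1 : Tendsto (fun s : ℝ => (s+M)/s) atTop (nhds 1) := by
      have heq : (fun s : ℝ => (s+M)/s) =ᶠ[atTop] fun s => 1 + M / s := by
        filter_upwards [eventually_ne_atTop (0:ℝ)] with s hs
        field_simp
      rw [tendsto_congr' heq]
      have h0 : Tendsto (fun s : ℝ => M / s) atTop (nhds 0) :=
        Tendsto.div_atTop tendsto_const_nhds tendsto_id
      simpa using (tendsto_const_nhds (x := (1:ℝ)) (f := atTop)).add h0
    have h2 := h1.pow n
    simpa using h2.const_mul (α / V.card)
  have hev : ∀ᶠ s in atTop, (volume (A ∩ cube n 0 s)).toReal / (2*s)^n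
      ≤ α / V.card * ((s+M)/s)^n := (eventually_ge_atTop 1).mono hbound
  have h0' : ∀ᶠ s in atTop, (0:ℝ) ≤ (volume (A ∩ cube n 0 s)).toReal / (2*s)^n := by
    filter_upwards [eventually_ge_atTop (1:ℝ)] with s hs
    have : (0:ℝ) < (2*s)^n := by positivity
    exact div_nonneg ENNReal.toReal_nonneg this.le
  have hfinal : upperDensity A ≤ α / V.card := by
    rw [upperDensity]
    calc limsup (fun s : ℝ => (volume (A ∩ cube n 0 s)).toReal / (2*s)^n) atTop
        ≤ limsup (fun s : ℝ => α / V.card * ((s+M)/s)^n) atTop :=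
          limsup_le_limsup hev (isCoboundedUnder_le_of_eventually_le atTop h0')
            hh.isBoundedUnder_le
      _ = α / V.card := hh.limsup_eq
  exact hfinal

end
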